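/- arXiv:1810.13299 — 2 statements merged into one kernel-verified Lean document; each statement's English description precedes it below -/
import Mathlib

section
/- (Weak limit along balls) Let μ ∈ M_s be a finite measure and T a CZO bounded in L²(μ). For every open ball B, lim_{t→0} ∫_B T_t(μ) dμ = ∫_B T(χ_{ℝ^d\B} μ) dμ, where T_t(μ)(x) = ∫_{|x−y|>t} K(x−y)dμ(y) and T(χ_{ℝ^d\B}μ)(x) = ∫_{ℝ^d\B} K(x−y)dμ(y) (absolutely convergent for x ∈ B under the assumption T_*(μ) ∈ L¹(μ)). -/
/-!
Split `μ = χ_B μ + χ_{Bᶜ} μ`. By antisymmetry of `K` and Fubini, `∫_B T_t(χ_B μ) dμ = 0`, so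
`∫_B T_t(μ) dμ = ∫_B T_t(χ_{Bᶜ} μ) dμ`. For `x` at distance at least `t` from `∂B` the truncation
no longer sees `Bᶜ`, so `T_t(χ_{Bᶜ} μ)(x) = T(χ_{Bᶜ} μ)(x)`; the two integrals over `B` thus differ
only on the collar `{x ∈ B : dist(x, ∂B) < t}`, whose measure tends to `0`. The `L²(μ)` bound gives
`‖T_t(χ_{Bᶜ} μ)‖₂ ≤ C` uniformly in `t`, hence (Fatou) also `‖T(χ_{Bᶜ} μ)‖_{L²(χ_B μ)} ≤ C`, and
Cauchy–Schwarz on the collar finishes the proof.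
-/

open MeasureTheory Metric Set Filter
open scoped ENNReal NNReal Topology

noncomputable section

section Integral

variable {α F : Type*} [MeasurableSpace α] [NormedAddCommGroup F] {μ : Measure α}

theorem eLpNorm_two_le_ofReal_sqrt {f : α → F} (hf : MemLp f 2 μ) {A : ℝ}
    (hA : ∫ x, ‖f x‖ ^ 2 ∂μ ≤ A) : eLpNorm f 2 μ ≤ ENNReal.ofReal √A := by
  rw [hf.eLpNorm_eq_integral_rpow_norm two_ne_zero ENNReal.ofNat_ne_top, Real.sqrt_eq_rpow]
  norm_num
  gcongr

theorem setIntegral_mul_indicator_one {S : Set α} (hS : MeasurableSet S)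
    (A : Set α) (f : α → ℂ) :
    ∫ y in A, f y * S.indicator 1 y ∂μ = ∫ y in A, f y ∂μ.restrict S := by
  simp_rw [← indicator_mul_right, Pi.one_apply, mul_one]
  rw [setIntegral_indicator hS, Measure.restrict_restrict' hS]

variable [NormedSpace ℝ F]

theorem enorm_setIntegral_le_eLpNorm_two_mul {f : α → F} (hf : AEStronglyMeasurable f μ)
    (s : Set α) : ‖∫ x in s, f x ∂μ‖ₑ ≤ eLpNorm f 2 μ * μ s ^ (1 / 2 : ℝ) := by
  calc ‖∫ x in s, f x ∂μ‖ₑ ≤ eLpNorm f 1 (μ.restrict s) := by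
        rw [eLpNorm_one_eq_lintegral_enorm]
        exact enorm_integral_le_lintegral_enorm _
    _ ≤ eLpNorm f 2 (μ.restrict s) *
          μ.restrict s univ ^ (1 / (1 : ℝ≥0∞).toReal - 1 / (2 : ℝ≥0∞).toReal) :=
        eLpNorm_le_eLpNorm_mul_rpow_measure_univ (p := 1) (q := 2) (by norm_num) hf.restrict
    _ ≤ eLpNorm f 2 μ * μ s ^ (1 / 2 : ℝ) := by
        rw [Measure.restrict_apply_univ]
        norm_num
        gcongr
        exact Measure.restrict_le_self

theorem tendsto_integral_of_eqOn_compl [CompleteSpace F] [IsFiniteMeasure μ] {ι : Type*}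
    {l : Filter ι} {f : ι → α → F} {g : α → F} {S : ι → Set α} {C : ℝ≥0∞} (hC : C ≠ ∞)
    (hf : ∀ᶠ i in l, MemLp (f i) 2 μ ∧ eLpNorm (f i) 2 μ ≤ C) (hg : MemLp g 2 μ)
    (hfg : ∀ i, EqOn (f i) g (S i)ᶜ) (hS : Tendsto (fun i => μ (S i)) l (𝓝 0)) :
    Tendsto (fun i => ∫ x, f i x ∂μ) l (𝓝 (∫ x, g x ∂μ)) := by
  rw [tendsto_iff_edist_tendsto_0]
  have hbound : Tendsto (fun i => (C + eLpNorm g 2 μ) * μ (S i) ^ (1 / 2 : ℝ)) l (𝓝 0) := by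
    have := (ENNReal.continuous_rpow_const (y := 1 / 2)).tendsto 0 |>.comp hS
    rw [ENNReal.zero_rpow_of_pos (by norm_num)] at this
    simpa using ENNReal.Tendsto.const_mul this (.inr (ENNReal.add_ne_top.2 ⟨hC, hg.2.ne⟩))
  refine tendsto_of_tendsto_of_tendsto_of_le_of_le' tendsto_const_nhds hbound
    (.of_forall fun _ => zero_le) ?_
  filter_upwards [hf] with i ⟨hfi, hfiC⟩
  have hdiff : ∫ x, f i x ∂μ - ∫ x, g x ∂μ = ∫ x in S i, (f i - g) x ∂μ := by
    rw [← integral_sub (hfi.integrable one_le_two) (hg.integrable one_le_two)]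
    refine (setIntegral_eq_integral_of_forall_compl_eq_zero fun x hx => ?_).symm
    simp [hfg i hx]
  calc edist (∫ x, f i x ∂μ) (∫ x, g x ∂μ) = ‖∫ x in S i, (f i - g) x ∂μ‖ₑ := by
        rw [edist_eq_enorm_sub, hdiff]
    _ ≤ eLpNorm (f i - g) 2 μ * μ (S i) ^ (1 / 2 : ℝ) :=
        enorm_setIntegral_le_eLpNorm_two_mul (hfi.1.sub hg.1) _
    _ ≤ (C + eLpNorm g 2 μ) * μ (S i) ^ (1 / 2 : ℝ) := by
        gcongr
        exact (eLpNorm_sub_le hfi.1 hg.1 one_le_two).trans (by gcongr)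

end Integral

section Collar

variable {X : Type*} [PseudoMetricSpace X] {z x : X} {R : ℝ}

theorem eventually_mem_closedBall_sub (hx : x ∈ ball z R) :
    ∀ᶠ t in 𝓝 (0 : ℝ), x ∈ closedBall z (R - t) := by
  filter_upwards [eventually_lt_nhds (sub_pos.2 (mem_ball.1 hx))] with t ht
  rw [mem_closedBall]
  linarith

theorem tendsto_measure_ball_diff_closedBall_sub [MeasurableSpace X] [OpensMeasurableSpace X]
    (μ : Measure X) [IsFiniteMeasure μ] (z : X) (R : ℝ) :
    Tendsto (fun t => μ.restrict (ball z R) (closedBall z (R - t))ᶜ) (𝓝[>] 0) (𝓝 0) := by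
  have hempty : ⋂ t > (0 : ℝ), (closedBall z (R - t))ᶜ ∩ ball z R = ∅ := by
    refine eq_empty_of_forall_notMem fun x hx => ?_
    simp only [mem_iInter] at hx
    have hxR := mem_ball.1 (hx 1 one_pos).2
    refine (hx ((R - dist x z) / 2) (by linarith)).1 (mem_closedBall.2 ?_)
    linarith
  have := tendsto_measure_biInter_gt (μ := μ) (a := 0)
    (s := fun t => (closedBall z (R - t))ᶜ ∩ ball z R)
    (fun _ _ => (measurableSet_closedBall.compl.inter measurableSet_ball).nullMeasurableSet)
    (fun _ _ _ hij => inter_subset_inter_left _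
      (compl_subset_compl.2 (closedBall_subset_closedBall (by linarith))))
    ⟨1, one_pos, measure_ne_top _ _⟩
  simpa [hempty, Function.comp_def, Measure.restrict_apply measurableSet_closedBall.compl]
    using this

end Collar

section Kernel

variable {E : Type*} [NormedAddCommGroup E] {K : E → ℂ} {s C t : ℝ}

theorem norm_le_div_rpow_of_le_norm (hs : 0 ≤ s) (hC : 0 ≤ C)
    (hsize : ∀ x : E, x ≠ 0 → ‖K x‖ ≤ C / ‖x‖ ^ s) (ht : 0 < t) {x : E} (hx : t ≤ ‖x‖) :
    ‖K x‖ ≤ C / t ^ s :=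
  (hsize x (norm_pos_iff.1 (ht.trans_le hx))).trans (by gcongr)

def truncatedKernel (K : E → ℂ) (t : ℝ) : E × E → ℂ :=
  {p | t ≤ dist p.1 p.2}.indicator fun p => K (p.1 - p.2)

theorem truncatedKernel_apply (x y : E) :
    truncatedKernel K t (x, y) = (ball x t)ᶜ.indicator (fun y => K (x - y)) y := by
  simp [truncatedKernel, indicator, dist_comm]

theorem truncatedKernel_swap (hodd : ∀ x : E, K (-x) = -K x) (p : E × E) :
    truncatedKernel K t p.swap = -truncatedKernel K t p := by
  by_cases hp : t ≤ dist p.1 p.2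
  · simp [truncatedKernel, hp, dist_comm, ← hodd]
  · simp [truncatedKernel, hp, dist_comm]

theorem norm_truncatedKernel_le (hs : 0 ≤ s) (hC : 0 ≤ C)
    (hsize : ∀ x : E, x ≠ 0 → ‖K x‖ ≤ C / ‖x‖ ^ s) (ht : 0 < t) (p : E × E) :
    ‖truncatedKernel K t p‖ ≤ C / t ^ s := by
  by_cases hp : t ≤ dist p.1 p.2
  · simpa [truncatedKernel, hp] using
      norm_le_div_rpow_of_le_norm hs hC hsize ht (by rwa [← dist_eq_norm])
  · simp only [truncatedKernel, mem_ofPred_eq, hp, not_false_eq_true, indicator_of_notMem,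
      norm_zero]
    positivity

variable [MeasurableSpace E] [BorelSpace E]

theorem measurable_of_norm_sub_le (hsmooth : ∀ x x' : E, x ≠ 0 → ‖x - x'‖ ≤ ‖x‖ / 2 →
      ‖K x - K x'‖ ≤ C * ‖x - x'‖ / ‖x‖ ^ (s + 1)) :
    Measurable K := by
  refine measurable_of_continuousOn_compl_singleton 0 fun x hx => ?_
  have hx0 : x ≠ 0 := hx
  refine ContinuousAt.continuousWithinAt ?_
  rw [ContinuousAt, tendsto_iff_norm_sub_tendsto_zero]
  have hlim : Tendsto (fun x' => C * ‖x - x'‖ / ‖x‖ ^ (s + 1)) (𝓝 x) (𝓝 0) := by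
    have : Continuous fun x' => C * ‖x - x'‖ / ‖x‖ ^ (s + 1) := by fun_prop
    simpa using this.tendsto x
  refine squeeze_zero' (.of_forall fun _ => norm_nonneg _) ?_ hlim
  filter_upwards [ball_mem_nhds x (half_pos (norm_pos_iff.2 hx0))] with x' hx'
  rw [norm_sub_rev]
  exact hsmooth x x' hx0 (by rw [mem_ball', dist_eq_norm] at hx'; exact hx'.le)

theorem setIntegral_compl_ball_restrict_compl_ball_eq (μ : Measure E) {x z : E} {R : ℝ}
    (hx : x ∈ closedBall z (R - t)) :
    ∫ y in (ball x t)ᶜ, K (x - y) ∂μ.restrict (ball z R)ᶜ = ∫ y in (ball z R)ᶜ, K (x - y) ∂μ := by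
  have hsub : (ball z R)ᶜ ⊆ (ball x t)ᶜ :=
    compl_subset_compl.2 (ball_subset_ball' (by linarith [mem_closedBall.1 hx]))
  rw [Measure.restrict_restrict' measurableSet_ball.compl, inter_eq_right.2 hsub]

theorem setIntegral_compl_ball_eq_integral_truncatedKernel (ν : Measure E) (x : E) :
    ∫ y in (ball x t)ᶜ, K (x - y) ∂ν = ∫ y, truncatedKernel K t (x, y) ∂ν := by
  simp_rw [truncatedKernel_apply, integral_indicator measurableSet_ball.compl]

variable [SecondCountableTopology E] {M : ℝ}

theorem measurable_truncatedKernel (hK : Measurable K) : Measurable (truncatedKernel K t) :=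
  (hK.comp (measurable_fst.sub measurable_snd)).indicator
    (measurableSet_le measurable_const (measurable_fst.dist measurable_snd))

theorem stronglyMeasurable_truncatedIntegral (hK : Measurable K) (ν : Measure E) [SFinite ν] :
    StronglyMeasurable fun x => ∫ y in (ball x t)ᶜ, K (x - y) ∂ν := by
  simp_rw [setIntegral_compl_ball_eq_integral_truncatedKernel]
  exact (measurable_truncatedKernel hK).stronglyMeasurable.integral_prod_right'

theorem memLp_truncatedIntegral (hK : Measurable K) (hM : ∀ p, ‖truncatedKernel K t p‖ ≤ M)
    (ν μ : Measure E) [IsFiniteMeasure ν] [IsFiniteMeasure μ] (p : ℝ≥0∞) :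
    MemLp (fun x => ∫ y in (ball x t)ᶜ, K (x - y) ∂ν) p μ := by
  refine .of_bound (stronglyMeasurable_truncatedIntegral hK ν).aestronglyMeasurable
    (M * ν.real univ) (.of_forall fun x => ?_)
  rw [setIntegral_compl_ball_eq_integral_truncatedKernel]
  exact norm_integral_le_of_norm_le_const (.of_forall fun y => hM (x, y))

theorem integral_truncatedIntegral_self_eq_zero (hodd : ∀ x : E, K (-x) = -K x)
    (hK : Measurable K) (hM : ∀ p, ‖truncatedKernel K t p‖ ≤ M) (ν : Measure E)
    [IsFiniteMeasure ν] : ∫ x, ∫ y in (ball x t)ᶜ, K (x - y) ∂ν ∂ν = 0 := by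
  have hint : Integrable (truncatedKernel K t) (ν.prod ν) :=
    .of_bound (measurable_truncatedKernel hK).aestronglyMeasurable M (.of_forall hM)
  have hswap : ∫ p, truncatedKernel K t p ∂ν.prod ν = -∫ p, truncatedKernel K t p ∂ν.prod ν := by
    rw [← integral_neg, ← integral_prod_swap]
    simp_rw [truncatedKernel_swap hodd]
  simp_rw [setIntegral_compl_ball_eq_integral_truncatedKernel, ← integral_prod _ hint]
  exact self_eq_neg.1 hswap

theorem setIntegral_truncatedIntegral_eq_restrict_compl (hodd : ∀ x : E, K (-x) = -K x)
    (hK : Measurable K) (hM : ∀ p, ‖truncatedKernel K t p‖ ≤ M) (μ : Measure E)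
    [IsFiniteMeasure μ] {S : Set E} (hS : MeasurableSet S) :
    ∫ x in S, ∫ y in (ball x t)ᶜ, K (x - y) ∂μ ∂μ =
      ∫ x in S, ∫ y in (ball x t)ᶜ, K (x - y) ∂μ.restrict Sᶜ ∂μ := by
  have hsplit : ∀ x, ∫ y in (ball x t)ᶜ, K (x - y) ∂μ =
      ∫ y in (ball x t)ᶜ, K (x - y) ∂μ.restrict S +
        ∫ y in (ball x t)ᶜ, K (x - y) ∂μ.restrict Sᶜ := fun x => by
    simp_rw [setIntegral_compl_ball_eq_integral_truncatedKernel]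
    exact (integral_add_compl hS (.of_bound ((measurable_truncatedKernel hK).comp
      measurable_prodMk_left).aestronglyMeasurable M (.of_forall fun y => hM (x, y)))).symm
  simp_rw [hsplit]
  rw [integral_add ((memLp_truncatedIntegral hK hM _ _ 1).integrable le_rfl)
    ((memLp_truncatedIntegral hK hM _ _ 1).integrable le_rfl),
    integral_truncatedIntegral_self_eq_zero hodd hK hM, zero_add]

theorem eLpNorm_truncatedIntegral_restrict_le {μ : Measure E} [IsFiniteMeasure μ] {Cb : ℝ}
    (hL2 : ∀ f : E → ℂ, MemLp f 2 μ → ∀ ε : ℝ, 0 < ε →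
      (∫ x, ‖∫ y in (ball x ε)ᶜ, K (x - y) * f y ∂μ‖ ^ 2 ∂μ) ≤ Cb * ∫ x, ‖f x‖ ^ 2 ∂μ)
    (hK : Measurable K) (hM : ∀ p, ‖truncatedKernel K t p‖ ≤ M) (ht : 0 < t) {S : Set E}
    (hS : MeasurableSet S) :
    eLpNorm (fun x => ∫ y in (ball x t)ᶜ, K (x - y) ∂μ.restrict S) 2 μ ≤
      ENNReal.ofReal √(Cb * μ.real S) := by
  refine eLpNorm_two_le_ofReal_sqrt (memLp_truncatedIntegral hK hM _ _ 2) ?_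
  have hnorm : ∀ x, ‖S.indicator (1 : E → ℂ) x‖ ^ 2 = S.indicator 1 x := fun x => by
    by_cases hx : x ∈ S <;> simp [hx]
  have := hL2 (S.indicator 1) ((memLp_const 1).indicator hS) t ht
  simpa only [setIntegral_mul_indicator_one hS, hnorm, integral_indicator_one hS] using this

end Kernel

theorem statement15_general (d : ℕ) (s CK : ℝ) (hs : 0 < s) (hCK : 0 < CK)
    (K : EuclideanSpace ℝ (Fin d) → ℂ)
    (hsize : ∀ x : EuclideanSpace ℝ (Fin d), x ≠ 0 → ‖K x‖ ≤ CK / ‖x‖ ^ s)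
    (hodd : ∀ x : EuclideanSpace ℝ (Fin d), K (-x) = -K x)
    (hsmooth : ∀ x x' : EuclideanSpace ℝ (Fin d), x ≠ 0 → ‖x - x'‖ ≤ ‖x‖ / 2 →
      ‖K x - K x'‖ ≤ CK * ‖x - x'‖ / ‖x‖ ^ (s + 1))
    (μ : Measure (EuclideanSpace ℝ (Fin d))) [IsFiniteMeasure μ]
    (hL2 : ∃ Cb : ℝ, 0 < Cb ∧ ∀ f : EuclideanSpace ℝ (Fin d) → ℂ, MemLp f 2 μ →
      ∀ ε : ℝ, 0 < ε →
        (∫ x, ‖∫ y in (ball x ε)ᶜ, K (x - y) * f y ∂μ‖ ^ 2 ∂μ) ≤ Cb * ∫ x, ‖f x‖ ^ 2 ∂μ)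
    (z : EuclideanSpace ℝ (Fin d)) (R : ℝ) :
    Tendsto (fun t : ℝ => ∫ x in ball z R, (∫ y in (ball x t)ᶜ, K (x - y) ∂μ) ∂μ)
      (𝓝[>] (0 : ℝ))
      (𝓝 (∫ x in ball z R, (∫ y in (ball z R)ᶜ, K (x - y) ∂μ) ∂μ)) := by
  obtain ⟨Cb, -, hL2⟩ := hL2
  set B := ball z R
  have hK := measurable_of_norm_sub_le hsmooth
  have hM := fun t (ht : 0 < t) => norm_truncatedKernel_le hs.le hCK.le hsize ht
  set F := fun t x => ∫ y in (ball x t)ᶜ, K (x - y) ∂μ.restrict Bᶜ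
  set g := fun x => ∫ y in Bᶜ, K (x - y) ∂μ
  have hFg : ∀ t, EqOn (F t) g (closedBall z (R - t)) := fun t x hx =>
    setIntegral_compl_ball_restrict_compl_ball_eq μ hx
  have hF : ∀ᶠ t in 𝓝[>] 0, MemLp (F t) 2 (μ.restrict B) ∧
      eLpNorm (F t) 2 (μ.restrict B) ≤ ENNReal.ofReal √(Cb * μ.real Bᶜ) := by
    filter_upwards [self_mem_nhdsWithin] with t (ht : 0 < t)
    exact ⟨memLp_truncatedIntegral hK (hM t ht) _ _ 2, (eLpNorm_restrict_le _ _ _ _).trans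
      (eLpNorm_truncatedIntegral_restrict_le hL2 hK (hM t ht) ht measurableSet_ball.compl)⟩
  have hlim : ∀ᵐ x ∂μ.restrict B, Tendsto (F · x) (𝓝[>] 0) (𝓝 (g x)) := by
    filter_upwards [ae_restrict_mem measurableSet_ball] with x hx
    refine tendsto_const_nhds.congr' ?_
    filter_upwards [nhdsWithin_le_nhds (eventually_mem_closedBall_sub hx)] with t ht
    exact (hFg t ht).symm
  have hFmeas : ∀ t, AEStronglyMeasurable (F t) (μ.restrict B) := fun t =>
    (stronglyMeasurable_truncatedIntegral hK _).aestronglyMeasurable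
  have hg : MemLp g 2 (μ.restrict B) :=
    ⟨aestronglyMeasurable_of_tendsto_ae _ hFmeas hlim,
      (Lp.eLpNorm_le_of_ae_tendsto (hF.mono fun _ h => h.2) hFmeas hlim).trans_lt
        ENNReal.ofReal_lt_top⟩
  refine (tendsto_integral_of_eqOn_compl ENNReal.ofReal_ne_top hF hg
    (fun t => by simpa only [compl_compl] using hFg t)
    (tendsto_measure_ball_diff_closedBall_sub μ z R)).congr' ?_
  filter_upwards [self_mem_nhdsWithin] with t (ht : 0 < t)
  exact (setIntegral_truncatedIntegral_eq_restrict_compl hodd hK (hM t ht) μ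
    measurableSet_ball).symm

/-- Weak limit along balls: let `μ ∈ M_s` be finite, `K` an antisymmetric
`s`-dimensional CZ kernel whose associated operator is bounded in `L²(μ)`.  Then for every
open ball `B`, `∫_B T_t(μ) dμ → ∫_B T(χ_{ℝ^d \ B} μ) dμ` as `t → 0⁺`. -/
theorem statement15 (d : ℕ) (s CK : ℝ) (hs : 0 < s) (hsd : s < d) (hCK : 0 < CK)
    (K : EuclideanSpace ℝ (Fin d) → ℂ)
    (hsize : ∀ x : EuclideanSpace ℝ (Fin d), x ≠ 0 → ‖K x‖ ≤ CK / ‖x‖ ^ s)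
    (hodd : ∀ x : EuclideanSpace ℝ (Fin d), K (-x) = -K x)
    (hsmooth : ∀ x x' : EuclideanSpace ℝ (Fin d), x ≠ 0 → ‖x - x'‖ ≤ ‖x‖ / 2 →
      ‖K x - K x'‖ ≤ CK * ‖x - x'‖ / ‖x‖ ^ (s + 1))
    (μ : Measure (EuclideanSpace ℝ (Fin d))) [IsFiniteMeasure μ]
    (hgrowth : ∀ (y : EuclideanSpace ℝ (Fin d)) (t : ℝ), 0 < t →
      μ (ball y t) ≤ ENNReal.ofReal (t ^ s))
    (hL2 : ∃ Cb : ℝ, 0 < Cb ∧ ∀ f : EuclideanSpace ℝ (Fin d) → ℂ, MemLp f 2 μ →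
      ∀ ε : ℝ, 0 < ε →
        (∫ x, ‖∫ y in (ball x ε)ᶜ, K (x - y) * f y ∂μ‖ ^ 2 ∂μ) ≤ Cb * ∫ x, ‖f x‖ ^ 2 ∂μ)
    (z : EuclideanSpace ℝ (Fin d)) (R : ℝ) (hR : 0 < R) :
    Tendsto (fun t : ℝ => ∫ x in ball z R, (∫ y in (ball x t)ᶜ, K (x - y) ∂μ) ∂μ)
      (𝓝[>] (0 : ℝ))
      (𝓝 (∫ x in ball z R, (∫ y in (ball z R)ᶜ, K (x - y) ∂μ) ∂μ)) :=
  statement15_general d s CK hs hCK K hsize hodd hsmooth μ hL2 z R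
end
end

section
/- (Spike measures satisfy nearby reflection symmetry) Fix odd k ≥ 1, m dividing k, L a line through the origin in ℂ, z ∈ ℂ, c ≥ 0, and let ν = c·Σ_{n=0}^{m−1} H¹|(e^{πin/m}L + z) be the associated k-spike measure. Then for every y ∈ supp ν and every r > 0: either ν is reflection symmetric about y in B(y,r) (i.e., ν(2y − E) = ν(E) for all Borel E ⊂ B(y,r)), or |y − z| ≤ r/sin(π/k); and ν is reflection symmetric about z in every ball B(z,R). -/
/-!
Each line of the spike passes through `z`, and the point reflection `u ↦ 2w - u` about any point
`w` of a line is an isometry mapping that line onto itself, so it preserves `H¹` restricted to the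
line. This gives the symmetry about `z` in every ball. If `y` lies on the line of angle `π n₀ / m`
and `u` on the line of angle `π n / m`, `n ≠ n₀`, then `|y - u| ≥ |y - z| |sin (π (n₀ - n) / m)|
≥ |y - z| sin (π / m) ≥ |y - z| sin (π / k)`; so when `|y - z| sin (π / k) > r` the ball `B(y, r)`
misses every line but the one through `y`, and the same reflection argument applies there.
-/

open MeasureTheory Metric Set
open scoped ENNReal NNReal Real

noncomputable section

/-- Reflection symmetry of a measure `ν` on `ℂ` about `w` inside a ball `B`. -/
def reflSymmOn (ν : Measure ℂ) (w : ℂ) (B : Set ℂ) : Prop :=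
  ∀ E : Set ℂ, MeasurableSet E → E ⊆ B → ν ((fun u => 2 * w - u) '' E) = ν E

section Reflection

variable {μ ν : Measure ℂ} {w : ℂ} {B S : Set ℂ}

lemma isometry_two_mul_sub (w : ℂ) : Isometry fun u : ℂ => 2 * w - u :=
  Isometry.of_dist_eq fun a b => by
    rw [dist_eq_norm, dist_eq_norm, ← norm_neg]
    ring_nf

lemma mapsTo_two_mul_sub_ball (w : ℂ) (r : ℝ) :
    MapsTo (fun u : ℂ => 2 * w - u) (ball w r) (ball w r) := fun u hu => by
  rw [mem_ball, ← (isometry_two_mul_sub w).dist_eq u w] at *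
  simpa [two_mul] using hu

lemma reflSymmOn.smul (h : reflSymmOn ν w B) (c : ℝ≥0∞) : reflSymmOn (c • ν) w B :=
  fun E hE hEB => by simp only [Measure.smul_apply, h E hE hEB]

lemma reflSymmOn_finset_sum {ι : Type*} {s : Finset ι} {ν : ι → Measure ℂ}
    (h : ∀ i ∈ s, reflSymmOn (ν i) w B) : reflSymmOn (∑ i ∈ s, ν i) w B :=
  fun E hE hEB => by
    simp only [Measure.finsetSum_apply]
    exact Finset.sum_congr rfl fun i hi => h i hi E hE hEB

lemma reflSymmOn_hausdorffMeasure_restrict (d : ℝ) (hS : MeasurableSet S)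
    (hSw : MapsTo (fun u : ℂ => 2 * w - u) S S) (B : Set ℂ) :
    reflSymmOn (μH[d].restrict S) w B := fun E _ _ => by
  have hpre : (fun u : ℂ => 2 * w - u) ⁻¹' S = S :=
    Subset.antisymm (fun u hu => by simpa using hSw hu) fun u hu => hSw hu
  rw [Measure.restrict_apply' hS, Measure.restrict_apply' hS, ← image_inter_preimage, hpre,
    (isometry_two_mul_sub w).hausdorffMeasure_image
      (Or.inr fun u => ⟨2 * w - u, by ring⟩)]

lemma reflSymmOn_restrict_of_disjoint {r : ℝ} (hS : MeasurableSet S)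
    (hdisj : Disjoint (ball w r) S) : reflSymmOn (μ.restrict S) w (ball w r) := fun E _ hEB => by
  have hnull : ∀ F ⊆ ball w r, μ.restrict S F = 0 := fun F hF => by
    rw [Measure.restrict_apply' hS, (hdisj.mono_left hF).inter_eq, measure_empty]
  rw [hnull E hEB, hnull _ ((image_mono hEB).trans (mapsTo_two_mul_sub_ball w r).image_subset)]

end Reflection

section Trigonometry

lemma sin_le_sin_of_le_of_le_pi_sub {a x : ℝ} (ha : -(π / 2) ≤ a) (hax : a ≤ x)
    (hxa : x ≤ π - a) : Real.sin a ≤ Real.sin x := by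
  rcases le_total x (π / 2) with hx | hx
  · exact Real.sin_le_sin_of_le_of_le_pi_div_two ha hx hax
  · rw [← Real.sin_pi_sub x]
    exact Real.sin_le_sin_of_le_of_le_pi_div_two ha (by linarith) (by linarith)

lemma sin_pi_div_le_abs_sin_pi_mul_div {m j : ℝ} (hj : 1 ≤ |j|) (hjm : |j| ≤ m - 1) :
    Real.sin (π / m) ≤ |Real.sin (π * j / m)| := by
  have hm : 0 < m := by linarith
  have habs : |π * j / m| = π * |j| / m := by
    rw [abs_div, abs_mul, abs_of_pos Real.pi_pos, abs_of_pos hm]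
  rw [Real.abs_sin_eq_sin_abs_of_abs_le_pi, habs]
  · apply sin_le_sin_of_le_of_le_pi_sub
    · have : 0 < π / m := by positivity
      linarith [Real.pi_pos]
    · exact div_le_div_of_nonneg_right (le_mul_of_one_le_right Real.pi_pos.le hj) hm.le
    · rw [le_sub_iff_add_le, ← add_div, div_le_iff₀ hm]
      nlinarith [mul_le_mul_of_nonneg_left hjm Real.pi_pos.le]
  · rw [habs, div_le_iff₀ hm]
    nlinarith [Real.pi_pos]

end Trigonometry

def spikeLine (L : Submodule ℝ ℂ) (z : ℂ) (θ : ℝ) : Set ℂ :=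
  (fun w : ℂ => Complex.exp (θ * Complex.I) * w + z) '' L

section Spike

variable {L : Submodule ℝ ℂ} {z : ℂ}

lemma isClosed_spikeLine (θ : ℝ) : IsClosed (spikeLine L z θ) :=
  (affineHomeomorph _ z (Complex.exp_ne_zero _)).isClosedMap _
    (Submodule.closed_of_finiteDimensional L)

lemma center_mem_spikeLine (θ : ℝ) : z ∈ spikeLine L z θ :=
  ⟨0, L.zero_mem, by simp⟩

lemma mapsTo_two_mul_sub_spikeLine {w : ℂ} {θ : ℝ} (hw : w ∈ spikeLine L z θ) :
    MapsTo (fun u : ℂ => 2 * w - u) (spikeLine L z θ) (spikeLine L z θ) := by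
  obtain ⟨a, ha, rfl⟩ := hw
  rintro _ ⟨b, hb, rfl⟩
  refine ⟨(2 : ℝ) • a - b, L.sub_mem (L.smul_mem 2 ha) hb, ?_⟩
  simp only [Complex.real_smul, Complex.ofReal_ofNat]
  ring

lemma abs_mul_abs_sin_sub_le_norm (s t A B : ℝ) :
    |s| * |Real.sin (A - B)| ≤
      ‖(s : ℂ) * Complex.exp (A * Complex.I) - t * Complex.exp (B * Complex.I)‖ := by
  have hrot : (s : ℂ) * Complex.exp (A * Complex.I) - t * Complex.exp (B * Complex.I) =
      Complex.exp (B * Complex.I) * (s * Complex.exp ((A - B : ℝ) * Complex.I) - t) := by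
    rw [mul_sub, ← mul_assoc, mul_comm _ (s : ℂ), mul_assoc, ← Complex.exp_add]
    push_cast
    ring_nf
  rw [hrot, norm_mul, Complex.norm_exp_ofReal_mul_I, one_mul, ← abs_mul]
  refine le_trans (le_of_eq ?_) (Complex.abs_im_le_norm _)
  rw [Complex.sub_im, Complex.ofReal_im, sub_zero, Complex.im_ofReal_mul,
    Complex.exp_ofReal_mul_I_im]

lemma dist_mul_abs_sin_le_dist (hL : Module.finrank ℝ L = 1) {y u : ℂ} {A B : ℝ}
    (hy : y ∈ spikeLine L z A) (hu : u ∈ spikeLine L z B) :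
    dist y z * |Real.sin (A - B)| ≤ dist y u := by
  obtain ⟨v, -, hv⟩ := finrank_eq_one_iff'.mp hL
  obtain ⟨a, ha, rfl⟩ := hy
  obtain ⟨b, hb, rfl⟩ := hu
  obtain ⟨s, hs⟩ := hv ⟨a, ha⟩
  obtain ⟨t, ht⟩ := hv ⟨b, hb⟩
  rw [Subtype.ext_iff] at hs ht
  simp only [SetLike.val_smul, Complex.real_smul] at hs ht
  subst hs ht
  have hyz : dist (Complex.exp (A * Complex.I) * (s * v) + z) z = |s| * ‖(v : ℂ)‖ := by
    rw [dist_eq_norm, add_sub_cancel_right, norm_mul, norm_mul, Complex.norm_exp_ofReal_mul_I,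
      Complex.norm_real, Real.norm_eq_abs, one_mul]
  have hyu : dist (Complex.exp (A * Complex.I) * (s * v) + z)
      (Complex.exp (B * Complex.I) * (t * v) + z) =
      ‖(s : ℂ) * Complex.exp (A * Complex.I) - t * Complex.exp (B * Complex.I)‖ * ‖(v : ℂ)‖ := by
    rw [dist_eq_norm, ← norm_mul]
    ring_nf
  rw [hyz, hyu, mul_right_comm]
  gcongr
  exact abs_mul_abs_sin_sub_le_norm s t A B

lemma disjoint_ball_spikeLine (hL : Module.finrank ℝ L = 1) {k m n n₀ : ℕ} (hk : 1 ≤ k)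
    (hm : m ∣ k) (hn : n < m) (hn₀ : n₀ < m) (hne : n ≠ n₀) {y : ℂ} {r : ℝ}
    (hy : y ∈ spikeLine L z (π * n₀ / m)) (hfar : r / Real.sin (π / k) < dist y z) :
    Disjoint (ball y r) (spikeLine L z (π * n / m)) := by
  have hm2 : (2 : ℝ) ≤ m := by exact_mod_cast (by omega : 2 ≤ m)
  have hmk : (m : ℝ) ≤ k := by exact_mod_cast Nat.le_of_dvd hk hm
  have hsin_pos : 0 < Real.sin (π / k) := by
    apply Real.sin_pos_of_pos_of_lt_pi (by positivity)
    rw [div_lt_iff₀ (by linarith)]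
    nlinarith [Real.pi_pos]
  have hkm : Real.sin (π / k) ≤ Real.sin (π / m) := by
    apply Real.sin_le_sin_of_le_of_le_pi_div_two
    · linarith [div_pos Real.pi_pos (by linarith : (0 : ℝ) < k), Real.pi_pos]
    · exact div_le_div_of_nonneg_left Real.pi_pos.le two_pos hm2
    · exact div_le_div_of_nonneg_left Real.pi_pos.le (by linarith) hmk
  have hmj : Real.sin (π / m) ≤ |Real.sin (π * n₀ / m - π * n / m)| := by
    have hn' : (n : ℝ) + 1 ≤ m := by exact_mod_cast hn
    have hn₀' : (n₀ : ℝ) + 1 ≤ m := by exact_mod_cast hn₀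
    have hj : (1 : ℝ) ≤ |(n₀ : ℝ) - n| := by
      exact_mod_cast Int.one_le_abs (sub_ne_zero.2 (by exact_mod_cast hne.symm : (n₀ : ℤ) ≠ n))
    rw [← sub_div, ← mul_sub]
    exact sin_pi_div_le_abs_sin_pi_mul_div hj (abs_sub_le_iff.2
      ⟨by linarith [n.cast_nonneg (α := ℝ)], by linarith [n₀.cast_nonneg (α := ℝ)]⟩)
  refine Set.disjoint_left.2 fun u hu hu' => (mem_ball'.1 hu).not_gt ?_
  calc r < dist y z * Real.sin (π / k) := (div_lt_iff₀ hsin_pos).1 hfar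
    _ ≤ dist y z * |Real.sin (π * n₀ / m - π * n / m)| := by gcongr; exact hkm.trans hmj
    _ ≤ dist y u := dist_mul_abs_sin_le_dist hL hy hu'

def spikeMeasure (L : Submodule ℝ ℂ) (z : ℂ) (c : ℝ) (m : ℕ) : Measure ℂ :=
  ENNReal.ofReal c • ∑ n ∈ Finset.range m, μH[1].restrict (spikeLine L z (π * n / m))

lemma support_spikeMeasure_subset (c : ℝ) (m : ℕ) :
    (spikeMeasure L z c m).support ⊆ ⋃ n ∈ Finset.range m, spikeLine L z (π * n / m) := by
  refine Measure.support_subset_of_isClosed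
    (isClosed_biUnion_finset fun n _ => isClosed_spikeLine _) (mem_ae_iff.2 ?_)
  simp only [spikeMeasure, Measure.smul_apply, Measure.finsetSum_apply, smul_eq_mul]
  refine mul_eq_zero_of_right _ (Finset.sum_eq_zero fun n hn => ?_)
  rw [Measure.restrict_apply' (isClosed_spikeLine _).measurableSet]
  exact measure_mono_null (fun u hu => hu.1 (mem_biUnion hn hu.2)) measure_empty

lemma reflSymmOn_spikeMeasure {c : ℝ} {m : ℕ} {w : ℂ} {B : Set ℂ}
    (h : ∀ n < m, reflSymmOn (μH[1].restrict (spikeLine L z (π * n / m))) w B) :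
    reflSymmOn (spikeMeasure L z c m) w B :=
  (reflSymmOn_finset_sum fun n hn => h n (Finset.mem_range.1 hn)).smul _

end Spike

theorem statement16_general (k m : ℕ) (hk1 : 1 ≤ k) (hm : m ∣ k)
    (L : Submodule ℝ ℂ) (hL : Module.finrank ℝ L = 1) (z : ℂ) (c : ℝ)
    (ν : Measure ℂ)
    (hν : ν = ENNReal.ofReal c •
      ∑ n ∈ Finset.range m,
        (MeasureTheory.Measure.hausdorffMeasure 1 : Measure ℂ).restrict
          ((fun w : ℂ => Complex.exp ((π * n / m) * Complex.I) * w + z) '' (L : Set ℂ))) :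
    (∀ y : ℂ, (∀ t : ℝ, 0 < t → ν (ball y t) ≠ 0) → ∀ r : ℝ, 0 < r →
        reflSymmOn ν y (ball y r) ∨ dist y z ≤ r / Real.sin (π / k)) ∧
    (∀ R : ℝ, 0 < R → reflSymmOn ν z (ball z R)) := by
  obtain rfl : ν = spikeMeasure L z c m := by
    simp only [hν, spikeMeasure, spikeLine]
    push_cast
    rfl
  refine ⟨fun y hy r _ => ?_, fun R _ => reflSymmOn_spikeMeasure fun n _ =>
    reflSymmOn_hausdorffMeasure_restrict 1 (isClosed_spikeLine _).measurableSet
      (mapsTo_two_mul_sub_spikeLine (center_mem_spikeLine _)) _⟩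
  have hy_supp : y ∈ (spikeMeasure L z c m).support :=
    nhds_basis_ball.mem_measureSupport.2 fun t ht => pos_iff_ne_zero.2 (hy t ht)
  obtain ⟨n₀, hn₀, hy₀⟩ := mem_iUnion₂.1 (support_spikeMeasure_subset c m hy_supp)
  rw [or_iff_not_imp_right, not_le]
  intro hfar
  refine reflSymmOn_spikeMeasure fun n hn => ?_
  rcases eq_or_ne n n₀ with rfl | hne
  · exact reflSymmOn_hausdorffMeasure_restrict 1 (isClosed_spikeLine _).measurableSet
      (mapsTo_two_mul_sub_spikeLine hy₀) _
  · exact reflSymmOn_restrict_of_disjoint (isClosed_spikeLine _).measurableSet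
      (disjoint_ball_spikeLine hL hk1 hm hn (Finset.mem_range.1 hn₀) hne hy₀ hfar)

/-- Spike measures satisfy nearby reflection symmetry: let
`ν = c Σ_{n<m} H¹|(e^{πin/m}L + z)` be a `k`-spike measure (`m ∣ k`, `k` odd).  For every
`y ∈ supp ν` and `r > 0`, either `ν` is reflection symmetric about `y` in `B(y,r)`, or
`|y - z| ≤ r / sin(π/k)`; moreover `ν` is reflection symmetric about `z` in every ball. -/
theorem statement16 (k m : ℕ) (hk : Odd k) (hk1 : 1 ≤ k) (hm : m ∣ k)
    (L : Submodule ℝ ℂ) (hL : Module.finrank ℝ L = 1) (z : ℂ) (c : ℝ) (hc : 0 ≤ c)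
    (ν : Measure ℂ)
    (hν : ν = ENNReal.ofReal c •
      ∑ n ∈ Finset.range m,
        (MeasureTheory.Measure.hausdorffMeasure 1 : Measure ℂ).restrict
          ((fun w : ℂ => Complex.exp ((π * n / m) * Complex.I) * w + z) '' (L : Set ℂ))) :
    (∀ y : ℂ, (∀ t : ℝ, 0 < t → ν (ball y t) ≠ 0) → ∀ r : ℝ, 0 < r →
        reflSymmOn ν y (ball y r) ∨ dist y z ≤ r / Real.sin (π / k)) ∧
    (∀ R : ℝ, 0 < R → reflSymmOn ν z (ball z R)) :=
  statement16_general k m hk1 hm L hL z c ν hν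
end
end
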